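/- Let (D, D_i) be a complete filtered ring whose associated graded ring gr D is left and right noetherian, and let (M, M_i) be a good filtered (D, D_i)-module. Then there exists a resolution L_• → M of M by free D-modules of finite type, together with filtrations (L_{n,i}) making each (L_n, L_{n,i}) a free filtered (D, D_i)-module of finite type, such that all the morphisms L_{n+1} → L_n and L_0 → M are strict filtered morphisms. Moreover, the associated graded complex gr L_• is then a resolution of gr M by free gr D-modules of finite type. -/

import Mathlib

/-!
Choose a strict free presentation `L₀ → M`. By the hypothesis on kernels, its kernel with the
induced filtration is again good, so it has a strict free presentation `L₁ → ker`, and iterating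
gives the resolution. Strictness says that `L_{m+1}` maps onto `ker ∩ (L_m)ᵢ` for every `i`,
which is what makes `gr L_•` exact: if `l ∈ Lᵢ` has image in level `i - 1`, subtract an element
of `L_{i-1}` with the same image and lift the difference, which lies in `ker ∩ Lᵢ`.
-/

universe u v

/-- The `i`-th filtration step of a filt free filtered `(D, Dᵢ)`-module of finite type,
a finite direct sum of twists `D(n k)` (where `D(n)ᵢ = D_{i+n}`). -/
def freeFilt {D : Type u} [Ring D] (FD : ℤ → AddSubgroup D) {s : ℕ} (n : Fin s → ℤ)
    (i : ℤ) : AddSubgroup (Fin s → D) where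
  carrier := {x | ∀ k, x k ∈ FD (i + n k)}
  zero_mem' := fun _ => (FD _).zero_mem
  add_mem' := fun hx hy k => (FD _).add_mem (hx k) (hy k)
  neg_mem' := fun hx k => (FD _).neg_mem (hx k)

/-- A filtration `(Mᵢ)` of a `D`-module `M` is good if it is the image filtration under a
strict surjective filtered morphism from a free filtered `(D, Dᵢ)`-module of finite type. -/
def IsGoodFiltration {D : Type u} [Ring D] (FD : ℤ → AddSubgroup D)
    {M : Type v} [AddCommGroup M] [Module D M] (FM : ℤ → AddSubgroup M) : Prop :=
  ∃ (s : ℕ) (n : Fin s → ℤ) (φ : (Fin s → D) →ₗ[D] M),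
    Function.Surjective φ ∧ ∀ i : ℤ, FM i = (freeFilt FD n i).map φ.toAddMonoidHom

theorem freeFilt_mono {D : Type u} [Ring D] {FD : ℤ → AddSubgroup D} (hFD : Monotone FD)
    {s : ℕ} (n : Fin s → ℤ) : Monotone (freeFilt FD n) :=
  fun _ _ hij _ hx k => hFD (by omega) (hx k)

theorem exists_sub_mem_of_strict_exact {L' L P : Type*} [AddGroup L'] [AddCommGroup L]
    [AddCommGroup P] (f : L' → L) (g : L →+ P) {A' : AddSubgroup L'} {A B : AddSubgroup L}
    {C : AddSubgroup P} (hBA : B ≤ A) (hker : ∀ l ∈ A, g l = 0 → ∃ y ∈ A', f y = l)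
    (hstrict : ∀ l, g l ∈ C → ∃ l' ∈ B, g l' = g l)
    {l : L} (hl : l ∈ A) (hgl : g l ∈ C) : ∃ y ∈ A', l - f y ∈ B := by
  obtain ⟨l', hl'B, hgl'⟩ := hstrict l hgl
  obtain ⟨y, hy, hfy⟩ := hker (l - l') (A.sub_mem hl (hBA hl'B)) (by rw [map_sub, hgl', sub_self])
  exact ⟨y, hy, by rwa [hfy, sub_sub_cancel]⟩

/-- The module `P` is bundled so that presentations of successive kernels can be iterated. -/
structure StrictFreePresentation (D : Type u) [Ring D] (FD : ℤ → AddSubgroup D) :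
    Type (u + 1) where
  P : Type u
  [addCommGroup : AddCommGroup P]
  [module : Module D P]
  FP : ℤ → AddSubgroup P
  s : ℕ
  n : Fin s → ℤ
  π : (Fin s → D) →ₗ[D] P
  surjective : Function.Surjective π
  strict : ∀ i, FP i = (freeFilt FD n i).map π.toAddMonoidHom

attribute [instance] StrictFreePresentation.addCommGroup StrictFreePresentation.module

def HasGoodKernels {D : Type u} [Ring D] (FD : ℤ → AddSubgroup D) : Prop :=
  ∀ (s : ℕ) (n : Fin s → ℤ) (P : Type u) [AddCommGroup P] [Module D P]
    (FP : ℤ → AddSubgroup P) (ψ : (Fin s → D) →ₗ[D] P),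
    Function.Surjective ψ → (∀ i : ℤ, FP i = (freeFilt FD n i).map ψ.toAddMonoidHom) →
    IsGoodFiltration FD (fun i =>
      (freeFilt FD n i).comap (LinearMap.ker ψ).subtype.toAddMonoidHom)

namespace StrictFreePresentation

variable {D : Type u} [Ring D] {FD : ℤ → AddSubgroup D}

noncomputable def ofIsGoodFiltration {P : Type u} [AddCommGroup P] [Module D P]
    {FP : ℤ → AddSubgroup P} (h : IsGoodFiltration FD FP) : StrictFreePresentation D FD where
  P := P
  FP := FP
  s := h.choose
  n := h.choose_spec.choose
  π := h.choose_spec.choose_spec.choose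
  surjective := h.choose_spec.choose_spec.choose_spec.1
  strict := h.choose_spec.choose_spec.choose_spec.2

variable (h : HasGoodKernels FD) (p : StrictFreePresentation D FD)

/-- A strict free presentation of `ker p.π`, filtered as a subobject of `freeFilt FD p.n`. -/
noncomputable def kernel : StrictFreePresentation D FD :=
  ofIsGoodFiltration (h p.s p.n p.P p.FP p.π p.surjective p.strict)

noncomputable def kernelMap : (Fin (p.kernel h).s → D) →ₗ[D] (Fin p.s → D) :=
  (LinearMap.ker p.π).subtype ∘ₗ (p.kernel h).π

noncomputable def resolution : ℕ → StrictFreePresentation D FD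
  | 0 => p
  | m + 1 => (resolution m).kernel h

variable {h p}

theorem exists_mem_freeFilt_π_eq {i : ℤ} {x : p.P} (hx : x ∈ p.FP i) :
    ∃ l ∈ freeFilt FD p.n i, p.π l = x := by
  rw [p.strict i] at hx
  exact hx

theorem exists_mem_freeFilt_sub_π_mem {i : ℤ} {x : p.P} (hx : x ∈ p.FP i) :
    ∃ l ∈ freeFilt FD p.n i, x - p.π l ∈ p.FP (i - 1) := by
  obtain ⟨l, hl, rfl⟩ := p.exists_mem_freeFilt_π_eq hx
  exact ⟨l, hl, by simp⟩

theorem π_kernelMap (x : Fin (p.kernel h).s → D) : p.π (p.kernelMap h x) = 0 :=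
  ((p.kernel h).π x).2

theorem kernelMap_eq_zero_iff {x : Fin (p.kernel h).s → D} :
    p.kernelMap h x = 0 ↔ (p.kernel h).π x = 0 :=
  Submodule.coe_eq_zero (x := ((p.kernel h).π x : LinearMap.ker p.π))

theorem exists_kernelMap_eq {l : Fin p.s → D} (hl : p.π l = 0) : ∃ y, p.kernelMap h y = l := by
  obtain ⟨y, hy⟩ := (p.kernel h).surjective ⟨l, hl⟩
  exact ⟨y, congrArg Subtype.val hy⟩

theorem kernelMap_kernelMap (x : Fin ((p.kernel h).kernel h).s → D) :
    p.kernelMap h ((p.kernel h).kernelMap h x) = 0 :=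
  kernelMap_eq_zero_iff.2 (π_kernelMap x)

theorem exists_kernelMap_eq_of_kernelMap_eq_zero {x : Fin (p.kernel h).s → D}
    (hx : p.kernelMap h x = 0) : ∃ y, (p.kernel h).kernelMap h y = x :=
  exists_kernelMap_eq (kernelMap_eq_zero_iff.1 hx)

theorem kernelMap_mem_freeFilt {i : ℤ} {y : Fin (p.kernel h).s → D}
    (hy : y ∈ freeFilt FD (p.kernel h).n i) : p.kernelMap h y ∈ freeFilt FD p.n i := by
  show (p.kernel h).π y ∈ (p.kernel h).FP i
  rw [(p.kernel h).strict i]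
  exact ⟨y, hy, rfl⟩

theorem exists_mem_freeFilt_kernelMap_eq {i : ℤ} {l : Fin p.s → D}
    (hl : l ∈ freeFilt FD p.n i) (hπl : p.π l = 0) :
    ∃ y ∈ freeFilt FD (p.kernel h).n i, p.kernelMap h y = l := by
  obtain ⟨y, hy, hyl⟩ :=
    (p.kernel h).exists_mem_freeFilt_π_eq (x := (⟨l, hπl⟩ : LinearMap.ker p.π)) hl
  exact ⟨y, hy, congrArg Subtype.val hyl⟩

theorem kernelMap_strict {i : ℤ} {x : Fin (p.kernel h).s → D}
    (hx : p.kernelMap h x ∈ freeFilt FD p.n i) :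
    ∃ y ∈ freeFilt FD (p.kernel h).n i, p.kernelMap h y = p.kernelMap h x :=
  exists_mem_freeFilt_kernelMap_eq hx (π_kernelMap x)

theorem exists_mem_freeFilt_sub_kernelMap_mem (hFD : Monotone FD) {i : ℤ}
    {l : Fin p.s → D} (hl : l ∈ freeFilt FD p.n i) (hπl : p.π l ∈ p.FP (i - 1)) :
    ∃ y ∈ freeFilt FD (p.kernel h).n i, l - p.kernelMap h y ∈ freeFilt FD p.n (i - 1) :=
  exists_sub_mem_of_strict_exact (p.kernelMap h) p.π.toAddMonoidHom
    (freeFilt_mono hFD p.n (by omega)) (fun _ => exists_mem_freeFilt_kernelMap_eq)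
    (fun _ => exists_mem_freeFilt_π_eq) hl hπl

end StrictFreePresentation

theorem stmt_16_general {D : Type u} [Ring D] {M : Type u} [AddCommGroup M] [Module D M]
    (FD : ℤ → AddSubgroup D) (hFDmono : Monotone FD)
    -- the noetherianity of `gr D`, via its consequence [Lau85, A.1.1.2]: the kernel of a
    -- strict filtered epimorphism from a free filtered module of finite type, with the
    -- induced filtration, is again a good filtered module
    (hkergood : ∀ (s : ℕ) (n : Fin s → ℤ) (P : Type u) [AddCommGroup P] [Module D P]
      (FP : ℤ → AddSubgroup P) (ψ : (Fin s → D) →ₗ[D] P),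
      Function.Surjective ψ → (∀ i : ℤ, FP i = (freeFilt FD n i).map ψ.toAddMonoidHom) →
      IsGoodFiltration FD (fun i =>
        (freeFilt FD n i).comap (LinearMap.ker ψ).subtype.toAddMonoidHom))
    (FM : ℤ → AddSubgroup M)
    (hMgood : IsGoodFiltration FD FM) :
    ∃ (s : ℕ → ℕ) (n : ∀ m : ℕ, Fin (s m) → ℤ)
      (φ : ∀ m : ℕ, (Fin (s (m + 1)) → D) →ₗ[D] (Fin (s m) → D))
      (φ0 : (Fin (s 0) → D) →ₗ[D] M),
      -- `L_• → M` is a resolution of `M`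
      Function.Surjective φ0 ∧
      (∀ x, φ0 (φ 0 x) = 0) ∧
      (∀ x, φ0 x = 0 → ∃ y, φ 0 y = x) ∧
      (∀ m x, φ m (φ (m + 1) x) = 0) ∧
      (∀ m x, φ m x = 0 → ∃ y, φ (m + 1) y = x) ∧
      -- `L_0 → M` is strict (a strict epimorphism onto `(M, Mᵢ)`)
      (∀ i : ℤ, FM i = (freeFilt FD (n 0) i).map φ0.toAddMonoidHom) ∧
      -- the `L_{m+1} → L_m` are strict filtered morphisms
      (∀ (m : ℕ) (i : ℤ), ∀ x ∈ freeFilt FD (n (m + 1)) i, φ m x ∈ freeFilt FD (n m) i) ∧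
      (∀ (m : ℕ) (i : ℤ) (x : Fin (s (m + 1)) → D), φ m x ∈ freeFilt FD (n m) i →
        ∃ y ∈ freeFilt FD (n (m + 1)) i, φ m y = φ m x) ∧
      -- moreover `gr L_•` is a resolution of `gr M` (by free `gr D`-modules of finite type)
      (∀ i : ℤ, ∀ x ∈ FM i, ∃ l ∈ freeFilt FD (n 0) i, x - φ0 l ∈ FM (i - 1)) ∧
      (∀ i : ℤ, ∀ l ∈ freeFilt FD (n 0) i, φ0 l ∈ FM (i - 1) →
        ∃ y ∈ freeFilt FD (n 1) i, l - φ 0 y ∈ freeFilt FD (n 0) (i - 1)) ∧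
      (∀ (m : ℕ) (i : ℤ), ∀ l ∈ freeFilt FD (n (m + 1)) i,
        φ m l ∈ freeFilt FD (n m) (i - 1) →
        ∃ y ∈ freeFilt FD (n (m + 2)) i, l - φ (m + 1) y ∈ freeFilt FD (n (m + 1)) (i - 1)) := by
  obtain ⟨s, n, π, hπ, hstrict⟩ := hMgood
  let L := StrictFreePresentation.resolution hkergood ⟨M, FM, s, n, π, hπ, hstrict⟩
  exact ⟨fun m => (L m).s, fun m => (L m).n, fun m => (L m).kernelMap hkergood, π, hπ,
    (L 0).π_kernelMap, fun _ => (L 0).exists_kernelMap_eq,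
    fun m => (L m).kernelMap_kernelMap, fun m _ => (L m).exists_kernelMap_eq_of_kernelMap_eq_zero,
    hstrict, fun m _ _ => (L m).kernelMap_mem_freeFilt, fun m _ _ => (L m).kernelMap_strict,
    fun _ _ => (L 0).exists_mem_freeFilt_sub_π_mem,
    fun _ _ => (L 0).exists_mem_freeFilt_sub_kernelMap_mem hFDmono,
    fun m _ _ => (L (m + 1)).exists_mem_freeFilt_sub_kernelMap_mem hFDmono⟩

/-- Over a complete filtered ring `(D, Dᵢ)` whose associated graded ring is noetherian (here
expressed, as in Laumon A.1.1.2, by the property that kernels of strict filtered epimorphisms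
from free filtered modules of finite type are again good), every good filtered `(D, Dᵢ)`-module
`(M, Mᵢ)` admits a good resolution: a resolution `L_• → M` by free filtered modules of finite
type with strict morphisms; moreover `gr L_•` is then a resolution of `gr M` by free
`gr D`-modules of finite type. -/
theorem stmt_16 {D : Type u} [Ring D] {M : Type u} [AddCommGroup M] [Module D M]
    (FD : ℤ → AddSubgroup D) (hFDmono : Monotone FD)
    (hFDone : (1 : D) ∈ FD 0)
    (hFDmul : ∀ i j : ℤ, ∀ a ∈ FD i, ∀ b ∈ FD j, a * b ∈ FD (i + j))
    (hFDexh : ∀ a : D, ∃ i, a ∈ FD i)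
    (hFDcomp : ∀ i : ℤ, ∀ y : ℕ → D, (∀ n, y n ∈ FD i) →
      (∀ n : ℕ, y (n + 1) - y n ∈ FD (i - (n : ℤ))) →
      ∃ z ∈ FD i, ∀ n : ℕ, z - y n ∈ FD (i - (n : ℤ)))
    (hFDsep : ∀ i : ℤ, ∀ a ∈ FD i, (∀ n : ℕ, a ∈ FD (i - (n : ℤ))) → a = 0)
    -- the noetherianity of `gr D`, via its consequence [Lau85, A.1.1.2]: the kernel of a
    -- strict filtered epimorphism from a free filtered module of finite type, with the
    -- induced filtration, is again a good filtered module
    (hkergood : ∀ (s : ℕ) (n : Fin s → ℤ) (P : Type u) [AddCommGroup P] [Module D P]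
      (FP : ℤ → AddSubgroup P) (ψ : (Fin s → D) →ₗ[D] P),
      Function.Surjective ψ → (∀ i : ℤ, FP i = (freeFilt FD n i).map ψ.toAddMonoidHom) →
      IsGoodFiltration FD (fun i =>
        (freeFilt FD n i).comap (LinearMap.ker ψ).subtype.toAddMonoidHom))
    (FM : ℤ → AddSubgroup M) (hFMmono : Monotone FM)
    (hFMsmul : ∀ i j : ℤ, ∀ a ∈ FD i, ∀ x ∈ FM j, a • x ∈ FM (i + j))
    (hMgood : IsGoodFiltration FD FM) :
    ∃ (s : ℕ → ℕ) (n : ∀ m : ℕ, Fin (s m) → ℤ)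
      (φ : ∀ m : ℕ, (Fin (s (m + 1)) → D) →ₗ[D] (Fin (s m) → D))
      (φ0 : (Fin (s 0) → D) →ₗ[D] M),
      -- `L_• → M` is a resolution of `M`
      Function.Surjective φ0 ∧
      (∀ x, φ0 (φ 0 x) = 0) ∧
      (∀ x, φ0 x = 0 → ∃ y, φ 0 y = x) ∧
      (∀ m x, φ m (φ (m + 1) x) = 0) ∧
      (∀ m x, φ m x = 0 → ∃ y, φ (m + 1) y = x) ∧
      -- `L_0 → M` is strict (a strict epimorphism onto `(M, Mᵢ)`)
      (∀ i : ℤ, FM i = (freeFilt FD (n 0) i).map φ0.toAddMonoidHom) ∧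
      -- the `L_{m+1} → L_m` are strict filtered morphisms
      (∀ (m : ℕ) (i : ℤ), ∀ x ∈ freeFilt FD (n (m + 1)) i, φ m x ∈ freeFilt FD (n m) i) ∧
      (∀ (m : ℕ) (i : ℤ) (x : Fin (s (m + 1)) → D), φ m x ∈ freeFilt FD (n m) i →
        ∃ y ∈ freeFilt FD (n (m + 1)) i, φ m y = φ m x) ∧
      -- moreover `gr L_•` is a resolution of `gr M` (by free `gr D`-modules of finite type)
      (∀ i : ℤ, ∀ x ∈ FM i, ∃ l ∈ freeFilt FD (n 0) i, x - φ0 l ∈ FM (i - 1)) ∧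
      (∀ i : ℤ, ∀ l ∈ freeFilt FD (n 0) i, φ0 l ∈ FM (i - 1) →
        ∃ y ∈ freeFilt FD (n 1) i, l - φ 0 y ∈ freeFilt FD (n 0) (i - 1)) ∧
      (∀ (m : ℕ) (i : ℤ), ∀ l ∈ freeFilt FD (n (m + 1)) i,
        φ m l ∈ freeFilt FD (n m) (i - 1) →
        ∃ y ∈ freeFilt FD (n (m + 2)) i, l - φ (m + 1) y ∈ freeFilt FD (n (m + 1)) (i - 1)) :=
  stmt_16_general FD hFDmono hkergood FM hMgood
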